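/- Let X, Y, Z be finite-valued random variables forming the Markov chain X − Y − Z, and let U, X̃ be such that U − X̃ − X − Y − Z is a Markov chain. Then I(U; X̃ | Z) ≥ I(U; X̃ | Y) and I(U; X | Z) ≥ I(U; X | Y). -/

import Mathlib

noncomputable section
open scoped BigOperators Classical
open Real

/-- Probability that random variable `X` takes value `a`, under pmf `p`. -/
def pmass {Ω A : Type*} [Fintype Ω] (p : Ω → ℝ) (X : Ω → A) (a : A) : ℝ :=
  ∑ ω, if X ω = a then p ω else 0

/-- Shannon entropy (base 2) of the random variable `X`. -/
def ent {Ω A : Type*} [Fintype Ω] [Fintype A] (p : Ω → ℝ) (X : Ω → A) : ℝ :=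
  ∑ a, -(pmass p X a * Real.logb 2 (pmass p X a))

/-- Conditional Shannon entropy H(X | Y). -/
def condEnt {Ω A B : Type*} [Fintype Ω] [Fintype A] [Fintype B]
    (p : Ω → ℝ) (X : Ω → A) (Y : Ω → B) : ℝ :=
  ent p (fun ω => (X ω, Y ω)) - ent p Y

/-- Mutual information I(X; Y). -/
def mi {Ω A B : Type*} [Fintype Ω] [Fintype A] [Fintype B]
    (p : Ω → ℝ) (X : Ω → A) (Y : Ω → B) : ℝ :=
  ent p X + ent p Y - ent p (fun ω => (X ω, Y ω))

/-- Conditional mutual information I(X; Y | Z). -/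
def cmi {Ω A B C : Type*} [Fintype Ω] [Fintype A] [Fintype B] [Fintype C]
    (p : Ω → ℝ) (X : Ω → A) (Y : Ω → B) (Z : Ω → C) : ℝ :=
  ent p (fun ω => (X ω, Z ω)) + ent p (fun ω => (Y ω, Z ω))
    - ent p (fun ω => (X ω, Y ω, Z ω)) - ent p Z

/-- `X` and `Y` are conditionally independent given `Z` (Markov chain X − Z − Y). -/
def CondIndep {Ω A B C : Type*} [Fintype Ω]
    (p : Ω → ℝ) (X : Ω → A) (Y : Ω → B) (Z : Ω → C) : Prop :=
  ∀ a b c, pmass p (fun ω => (X ω, Y ω, Z ω)) (a, b, c) * pmass p Z c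
    = pmass p (fun ω => (X ω, Z ω)) (a, c) * pmass p (fun ω => (Y ω, Z ω)) (b, c)

/-- `p` is a probability mass function on the finite sample space. -/
structure IsPMF {Ω : Type*} [Fintype Ω] (p : Ω → ℝ) : Prop where
  nonneg : ∀ ω, 0 ≤ p ω
  sum_one : ∑ ω, p ω = 1

/-!
A Markov chain `X − Z − Y` makes `I(X; Y | Z)` vanish, and conditional mutual information is
nonnegative (Gibbs' inequality, from `1 - 1/y ≤ log y`). Hence, for Markov chains
`(T, V) − Y − Z` and `T − V − (Y, Z)`, we have `I(T; Z | Y) = 0` and `I(T; Y | V, Z) = 0`, and the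
chain rule applied to `I(T; V, Z | Y)` and `I(T; V, Y | Z)` in both orders gives
`I(T; V | Y) ≤ I(T; V | Y) + I(T; Z | V, Y) = I(T; V | Z, Y) ≤ I(T; V | Z)`.
The two claims are the cases `(T, V) = (U, X̃)` and `(T, V) = (U, X)`.
-/

open Finset

lemma sub_div_log_two_le_mul_logb {x u v w : ℝ} (hx : 0 ≤ x) (hxu : x ≤ u) (hxv : x ≤ v)
    (huw : u ≤ w) :
    (x - u * v / w) / log 2 ≤ x * (logb 2 x + logb 2 w - logb 2 u - logb 2 v) := by
  have hlog2 : 0 < log 2 := log_pos one_lt_two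
  rcases hx.eq_or_lt with rfl | hx
  · have : 0 ≤ u * v / w := div_nonneg (mul_nonneg hxu hxv) (hxu.trans huw)
    simp only [zero_sub, zero_mul]
    exact div_nonpos_of_nonpos_of_nonneg (by linarith) hlog2.le
  have hu : 0 < u := hx.trans_le hxu
  have hv : 0 < v := hx.trans_le hxv
  have hw : 0 < w := hu.trans_le huw
  have hr : 0 < u * v / w := by positivity
  have h_log : log x + log w - log u - log v = log (x / (u * v / w)) := by
    rw [log_div hx.ne' hr.ne', log_div (mul_pos hu hv).ne' hw.ne', log_mul hu.ne' hv.ne']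
    ring
  have h_gibbs : x - u * v / w ≤ x * log (x / (u * v / w)) := by
    have := mul_le_mul_of_nonneg_left (one_sub_inv_le_log_of_pos (div_pos hx hr)) hx.le
    rwa [inv_div, mul_sub, mul_one, mul_div_cancel₀ _ hx.ne'] at this
  calc (x - u * v / w) / log 2 ≤ x * log (x / (u * v / w)) / log 2 := by gcongr
    _ = x * (logb 2 x + logb 2 w - logb 2 u - logb 2 v) := by
      simp only [logb, ← h_log]
      ring

section pmass

variable {Ω A B C : Type*} [Fintype Ω] (p : Ω → ℝ)

lemma pmass_nonneg (hp : ∀ ω, 0 ≤ p ω) (X : Ω → A) (a : A) : 0 ≤ pmass p X a :=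
  sum_nonneg fun ω _ => by split_ifs <;> simp [hp ω]

lemma sum_pmass [Fintype A] (X : Ω → A) : ∑ a, pmass p X a = ∑ ω, p ω := by
  unfold pmass
  rw [sum_comm]
  simp

lemma pmass_comp_eq_sum [Fintype A] (X : Ω → A) (g : A → B) (b : B) :
    pmass p (fun ω => g (X ω)) b = ∑ a with g a = b, pmass p X a := by
  unfold pmass
  rw [sum_comm]
  refine sum_congr rfl fun ω _ => ?_
  simp

lemma sum_pmass_prod_fst [Fintype A] (X : Ω → A) (Z : Ω → C) (c : C) :
    ∑ a, pmass p (fun ω => (X ω, Z ω)) (a, c) = pmass p Z c := by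
  unfold pmass
  rw [sum_comm]
  refine sum_congr rfl fun ω _ => ?_
  by_cases h : Z ω = c <;> simp [h]

lemma pmass_le_pmass_comp (hp : ∀ ω, 0 ≤ p ω) (X : Ω → A) (g : A → B) (a : A) :
    pmass p X a ≤ pmass p (fun ω => g (X ω)) (g a) :=
  sum_le_sum fun ω _ => by split_ifs with h h' <;> simp_all

lemma pmass_comp_of_injective {g : A → B} (hg : g.Injective) (X : Ω → A) (a : A) :
    pmass p (fun ω => g (X ω)) (g a) = pmass p X a := by
  simp only [pmass, hg.eq_iff]

lemma ent_comp_eq_sum [Fintype A] [Fintype B] (X : Ω → A) (g : A → B) :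
    ent p (fun ω => g (X ω))
      = ∑ a, -(pmass p X a * logb 2 (pmass p (fun ω => g (X ω)) (g a))) := by
  unfold ent
  rw [← sum_fiberwise univ g]
  refine sum_congr rfl fun b _ => ?_
  have h_fiber : ∀ a ∈ ({a | g a = b} : Finset A),
      -(pmass p X a * logb 2 (pmass p (fun ω => g (X ω)) (g a)))
        = -(pmass p X a * logb 2 (pmass p (fun ω => g (X ω)) b)) := by
    intro a ha
    rw [(mem_filter.1 ha).2]
  rw [sum_congr rfl h_fiber, sum_neg_distrib, ← sum_mul, ← pmass_comp_eq_sum]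

lemma ent_comp_of_injective [Fintype A] [Fintype B] {g : A → B} (hg : g.Injective)
    (X : Ω → A) : ent p (fun ω => g (X ω)) = ent p X := by
  rw [ent_comp_eq_sum, ent]
  simp only [pmass_comp_of_injective p hg]

end pmass

section cmi

variable {Ω A B C D : Type*} [Fintype Ω] [Fintype A] [Fintype B] [Fintype C] [Fintype D]
  (p : Ω → ℝ)

lemma cmi_comp_injective {A' B' C' : Type*} [Fintype A'] [Fintype B'] [Fintype C']
    {f : A → A'} {g : B → B'} {h : C → C'} (hf : f.Injective) (hg : g.Injective)
    (hh : h.Injective) (X : Ω → A) (Y : Ω → B) (Z : Ω → C) :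
    cmi p (fun ω => f (X ω)) (fun ω => g (Y ω)) (fun ω => h (Z ω)) = cmi p X Y Z := by
  unfold cmi
  rw [← ent_comp_of_injective p (hf.prodMap hh) (fun ω => (X ω, Z ω)),
    ← ent_comp_of_injective p (hg.prodMap hh) (fun ω => (Y ω, Z ω)),
    ← ent_comp_of_injective p
      (hf.prodMap (hg.prodMap hh)) (fun ω => (X ω, Y ω, Z ω)),
    ← ent_comp_of_injective p hh Z]
  rfl

lemma cmi_comm (X : Ω → A) (Y : Ω → B) (Z : Ω → C) : cmi p X Y Z = cmi p Y X Z := by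
  unfold cmi
  rw [← ent_comp_of_injective p (g := fun t : A × B × C => (t.2.1, t.1, t.2.2))
    (fun s t hst => by simp_all [Prod.ext_iff]) (fun ω => (X ω, Y ω, Z ω))]
  ring

lemma cmi_pair_eq_add (X : Ω → A) (V : Ω → B) (W : Ω → C) (Z : Ω → D) :
    cmi p X (fun ω => (V ω, W ω)) Z = cmi p X W Z + cmi p X V (fun ω => (W ω, Z ω)) := by
  unfold cmi
  rw [← ent_comp_of_injective p (g := fun t : B × C × D => ((t.1, t.2.1), t.2.2))
      (fun s t hst => by simp_all [Prod.ext_iff]) (fun ω => (V ω, W ω, Z ω)),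
    ← ent_comp_of_injective p (g := fun t : A × B × C × D => (t.1, (t.2.1, t.2.2.1), t.2.2.2))
      (fun s t hst => by simp_all [Prod.ext_iff]) (fun ω => (X ω, V ω, W ω, Z ω))]
  ring

lemma cmi_swap_mid (X : Ω → A) (V : Ω → B) (W : Ω → C) (Z : Ω → D) :
    cmi p X (fun ω => (V ω, W ω)) Z = cmi p X (fun ω => (W ω, V ω)) Z :=
  (cmi_comp_injective p Function.injective_id Prod.swap_injective Function.injective_id X _ Z).symm

lemma cmi_swap_right (X : Ω → A) (Y : Ω → B) (V : Ω → C) (W : Ω → D) :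
    cmi p X Y (fun ω => (V ω, W ω)) = cmi p X Y (fun ω => (W ω, V ω)) :=
  (cmi_comp_injective p Function.injective_id Function.injective_id Prod.swap_injective X Y _).symm

lemma cmi_eq_sum (X : Ω → A) (Y : Ω → B) (Z : Ω → C) :
    cmi p X Y Z = ∑ t : A × B × C, pmass p (fun ω => (X ω, Y ω, Z ω)) t *
      (logb 2 (pmass p (fun ω => (X ω, Y ω, Z ω)) t) + logb 2 (pmass p Z t.2.2)
        - logb 2 (pmass p (fun ω => (X ω, Z ω)) (t.1, t.2.2))
        - logb 2 (pmass p (fun ω => (Y ω, Z ω)) (t.2.1, t.2.2))) := by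
  set J := fun ω => (X ω, Y ω, Z ω)
  have hXZ : ent p (fun ω => (X ω, Z ω))
      = ∑ t, -(pmass p J t * logb 2 (pmass p (fun ω => (X ω, Z ω)) (t.1, t.2.2))) :=
    ent_comp_eq_sum p J fun t => (t.1, t.2.2)
  have hYZ : ent p (fun ω => (Y ω, Z ω))
      = ∑ t, -(pmass p J t * logb 2 (pmass p (fun ω => (Y ω, Z ω)) (t.2.1, t.2.2))) :=
    ent_comp_eq_sum p J fun t => (t.2.1, t.2.2)
  have hZ : ent p Z = ∑ t, -(pmass p J t * logb 2 (pmass p Z t.2.2)) :=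
    ent_comp_eq_sum p J fun t => t.2.2
  rw [cmi, hXZ, hYZ, hZ, ent, ← sum_add_distrib, ← sum_sub_distrib, ← sum_sub_distrib]
  exact sum_congr rfl fun t _ => by ring

lemma sum_pmass_mul_pmass_div (X : Ω → A) (Y : Ω → B) (Z : Ω → C) :
    ∑ t : A × B × C, pmass p (fun ω => (X ω, Z ω)) (t.1, t.2.2)
      * pmass p (fun ω => (Y ω, Z ω)) (t.2.1, t.2.2) / pmass p Z t.2.2 = ∑ ω, p ω := by
  simp only [Fintype.sum_prod_type_right]
  rw [← sum_pmass p Z]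
  refine sum_congr rfl fun c _ => ?_
  simp_rw [← sum_div]
  rw [sum_comm, ← sum_mul_sum, sum_pmass_prod_fst, sum_pmass_prod_fst,
    mul_self_div_self]

end cmi

section nonneg

variable {Ω A B C D : Type*} [Fintype Ω] [Fintype A] [Fintype B] [Fintype C] [Fintype D]
  {p : Ω → ℝ}

lemma cmi_nonneg (hp : ∀ ω, 0 ≤ p ω) (X : Ω → A) (Y : Ω → B) (Z : Ω → C) :
    0 ≤ cmi p X Y Z := by
  set J := fun ω => (X ω, Y ω, Z ω)
  rw [cmi_eq_sum]
  calc (0 : ℝ) = ((∑ t, pmass p J t) - ∑ t : A × B × C,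
        pmass p (fun ω => (X ω, Z ω)) (t.1, t.2.2)
          * pmass p (fun ω => (Y ω, Z ω)) (t.2.1, t.2.2) / pmass p Z t.2.2) / log 2 := by
        rw [sum_pmass, sum_pmass_mul_pmass_div, sub_self, zero_div]
    _ ≤ _ := by
      rw [← sum_sub_distrib, sum_div]
      refine sum_le_sum fun t _ => sub_div_log_two_le_mul_logb (pmass_nonneg p hp _ _)
        (pmass_le_pmass_comp p hp J (fun t => (t.1, t.2.2)) t)
        (pmass_le_pmass_comp p hp J (fun t => (t.2.1, t.2.2)) t)
        (pmass_le_pmass_comp p hp (fun ω => (X ω, Z ω)) Prod.snd (t.1, t.2.2))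

lemma cmi_eq_zero_of_condIndep (hp : ∀ ω, 0 ≤ p ω) {X : Ω → A} {Y : Ω → B} {Z : Ω → C}
    (h : CondIndep p X Y Z) : cmi p X Y Z = 0 := by
  set J := fun ω => (X ω, Y ω, Z ω)
  rw [cmi_eq_sum]
  refine sum_eq_zero fun ⟨a, b, c⟩ _ => ?_
  rcases (pmass_nonneg p hp J (a, b, c)).eq_or_lt with h0 | hpos
  · rw [← h0, zero_mul]
  have hu : 0 < pmass p (fun ω => (X ω, Z ω)) (a, c) :=
    hpos.trans_le (pmass_le_pmass_comp p hp J (fun t => (t.1, t.2.2)) (a, b, c))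
  have hv : 0 < pmass p (fun ω => (Y ω, Z ω)) (b, c) :=
    hpos.trans_le (pmass_le_pmass_comp p hp J (fun t => (t.2.1, t.2.2)) (a, b, c))
  have hw : 0 < pmass p Z c := hpos.trans_le (pmass_le_pmass_comp p hp J (fun t => t.2.2) _)
  have h_logb := congrArg (logb 2) (h a b c)
  rw [logb_mul hpos.ne' hw.ne', logb_mul hu.ne' hv.ne'] at h_logb
  rw [h_logb]
  ring

lemma cmi_comp_mid_le (hp : ∀ ω, 0 ≤ p ω) (X : Ω → A) (W : Ω → B) (Z : Ω → C) (f : B → D) :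
    cmi p X (fun ω => f (W ω)) Z ≤ cmi p X W Z :=
  calc cmi p X (fun ω => f (W ω)) Z
      ≤ cmi p X (fun ω => f (W ω)) Z + cmi p X W (fun ω => (f (W ω), Z ω)) :=
        le_add_of_nonneg_right (cmi_nonneg hp _ _ _)
    _ = cmi p X (fun ω => (W ω, f (W ω))) Z := (cmi_pair_eq_add p X W _ Z).symm
    _ = cmi p X W Z :=
        cmi_comp_injective p (g := fun w => (w, f w)) Function.injective_id
          (fun _ _ h => (Prod.ext_iff.1 h).1) Function.injective_id X W Z

lemma cmi_comp_left_le (hp : ∀ ω, 0 ≤ p ω) (W : Ω → A) (Y : Ω → B) (Z : Ω → C) (f : A → D) :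
    cmi p (fun ω => f (W ω)) Y Z ≤ cmi p W Y Z := by
  rw [cmi_comm, cmi_comm p W]
  exact cmi_comp_mid_le hp Y W Z f

lemma cmi_comp_left_eq_zero (hp : ∀ ω, 0 ≤ p ω) {W : Ω → A} {Y : Ω → B} {Z : Ω → C}
    (h : cmi p W Y Z = 0) (f : A → D) : cmi p (fun ω => f (W ω)) Y Z = 0 :=
  le_antisymm (h ▸ cmi_comp_left_le hp W Y Z f) (cmi_nonneg hp _ _ _)

lemma cmi_comp_mid_eq_zero (hp : ∀ ω, 0 ≤ p ω) {X : Ω → A} {W : Ω → B} {Z : Ω → C}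
    (h : cmi p X W Z = 0) (f : B → D) : cmi p X (fun ω => f (W ω)) Z = 0 :=
  le_antisymm (h ▸ cmi_comp_mid_le hp X W Z f) (cmi_nonneg hp _ _ _)

lemma cmi_eq_zero_of_pair_mid (hp : ∀ ω, 0 ≤ p ω) {X : Ω → A} {V : Ω → B} {W : Ω → C}
    {Z : Ω → D} (h : cmi p X (fun ω => (V ω, W ω)) Z = 0) :
    cmi p X V (fun ω => (W ω, Z ω)) = 0 := by
  rw [cmi_pair_eq_add] at h
  linarith [cmi_nonneg hp X W Z, cmi_nonneg hp X V (fun ω => (W ω, Z ω))]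

lemma cmi_le_cmi_of_markov (hp : ∀ ω, 0 ≤ p ω) {T : Ω → A} {V : Ω → B} {Y : Ω → C}
    {Z : Ω → D} (hTV : cmi p (fun ω => (T ω, V ω)) Z Y = 0)
    (hT : cmi p T (fun ω => (Y ω, Z ω)) V = 0) :
    cmi p T V Y ≤ cmi p T V Z := by
  have hTZ : cmi p T Z Y = 0 := cmi_comp_left_eq_zero hp hTV Prod.fst
  have hTY : cmi p T Y (fun ω => (V ω, Z ω)) = 0 := by
    rw [cmi_swap_right]
    exact cmi_eq_zero_of_pair_mid hp hT
  calc cmi p T V Y ≤ cmi p T V Y + cmi p T Z (fun ω => (V ω, Y ω)) :=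
        le_add_of_nonneg_right (cmi_nonneg hp _ _ _)
    _ = cmi p T V (fun ω => (Z ω, Y ω)) := by
        rw [← cmi_pair_eq_add, cmi_swap_mid, cmi_pair_eq_add, hTZ, zero_add]
    _ ≤ cmi p T Y Z + cmi p T V (fun ω => (Y ω, Z ω)) := by
        rw [cmi_swap_right p T V Z]
        exact le_add_of_nonneg_left (cmi_nonneg hp _ _ _)
    _ = cmi p T V Z := by
        rw [← cmi_pair_eq_add, cmi_swap_mid, cmi_pair_eq_add, hTY, add_zero]

end nonneg

/-- Under the Markov chain U − X̃ − X − Y − Z: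
I(U; X̃ | Z) ≥ I(U; X̃ | Y) and I(U; X | Z) ≥ I(U; X | Y). -/
theorem stmt_8 {Ω A B C D E : Type} [Fintype Ω] [Fintype A] [Fintype B] [Fintype C]
    [Fintype D] [Fintype E]
    (p : Ω → ℝ) (hp : IsPMF p)
    (U : Ω → A) (Xt : Ω → B) (X : Ω → C) (Y : Ω → D) (Z : Ω → E)
    (h1 : CondIndep p U (fun ω => (X ω, Y ω, Z ω)) Xt)
    (h2 : CondIndep p (fun ω => (U ω, Xt ω)) (fun ω => (Y ω, Z ω)) X)
    (h3 : CondIndep p (fun ω => (U ω, Xt ω, X ω)) Z Y) :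
    cmi p U Xt Z ≥ cmi p U Xt Y ∧ cmi p U X Z ≥ cmi p U X Y := by
  have hp := hp.nonneg
  have h1 := cmi_eq_zero_of_condIndep hp h1
  have h2 := cmi_eq_zero_of_condIndep hp h2
  have h3 := cmi_eq_zero_of_condIndep hp h3
  exact ⟨cmi_le_cmi_of_markov hp (cmi_comp_left_eq_zero hp h3 fun t => (t.1, t.2.1))
      (cmi_comp_mid_eq_zero hp h1 fun t => t.2),
    cmi_le_cmi_of_markov hp (cmi_comp_left_eq_zero hp h3 fun t => (t.1, t.2.2))
      (cmi_comp_left_eq_zero hp h2 Prod.fst)⟩
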